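/- Quadratic upper bound for the population risk in orbit distance (Proposition A.9). Fix d ≥ 1, σ > 0, M ≥ √d and fix any X⋆ ∈ ([0,1]^d)ⁿ. Define Rₙ⁰(X) = N⁻¹ Σ_{i<j} g(r_{ij}(X); r_{ij}⋆). Then there exists a constant C_up = C_up(d,σ,M) > 0 such that for every X ∈ ([0,1]^d)ⁿ, Rₙ⁰(X) − Rₙ⁰(X⋆) ≤ C_up · d_G(X, X⋆)². -/

import Mathlib

open MeasureTheory ProbabilityTheory Filter

noncomputable section

/-- The standard normal probability density function φ. -/
def stdPDF (x : ℝ) : ℝ := Real.exp (-(x ^ 2) / 2) / Real.sqrt (2 * Real.pi)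

/-- The standard normal cumulative distribution function Φ. -/
def stdCDF (x : ℝ) : ℝ := ∫ t in Set.Iic x, stdPDF t

/-- The standard Gaussian measure on ℝ. -/
def stdGaussian : Measure ℝ := gaussianReal 0 1

/-- `T_M([u]₊) = min{max{u,0}, M}`. -/
def capPos (M u : ℝ) : ℝ := min M (max u 0)

/-- The density `q_{M,r}(y)` of the capped observation with respect to
`ν = δ₀ + Leb|_(0,M) + δ_M`. -/
def qDen (σ M r y : ℝ) : ℝ :=
  if y = 0 then stdCDF (-r / σ)
  else if y = M then 1 - stdCDF ((M - r) / σ)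
  else σ⁻¹ * stdPDF ((y - r) / σ)

/-- The loss `ℓ_M(y, r) = - log q_{M,r}(y)`. -/
def lossM (σ M y r : ℝ) : ℝ := - Real.log (qDen σ M r y)

/-- The reference measure `ν = δ₀ + Leb|_(0,M) + δ_M`. -/
def refMeas (M : ℝ) : Measure ℝ :=
  Measure.dirac 0 + volume.restrict (Set.Ioo 0 M) + Measure.dirac M

/-- The law `P_r` of the capped observation `T_M([r + σZ]₊)`. -/
def cappedLaw (σ M r : ℝ) : Measure ℝ :=
  Measure.map (fun z => capPos M (r + σ * z)) stdGaussian

/-- The capped mean `μ_M(r) = E[T_M([r + σZ]₊)]`. -/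
def cappedMean (σ M r : ℝ) : ℝ := ∫ z, capPos M (r + σ * z) ∂stdGaussian

/-- The population loss `g(r; r⋆) = E[ℓ_M(T_M([r⋆+σZ]₊), r)]`. -/
def popLoss (σ M r rstar : ℝ) : ℝ :=
  ∫ z, lossM σ M (capPos M (rstar + σ * z)) r ∂stdGaussian

/-- Euclidean distance on `Fin d → ℝ`. -/
def eDist {d : ℕ} (x y : Fin d → ℝ) : ℝ := Real.sqrt (∑ k, (x k - y k) ^ 2)

/-- The cube `([0,1]^d)^n` of configurations of `n` points. -/
def cube (n d : ℕ) : Set (Fin n → Fin d → ℝ) :=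
  {X | ∀ i k, X i k ∈ Set.Icc (0 : ℝ) 1}

/-- Number of unordered pairs `N = n(n-1)/2` as a real. -/
def numPairs (n : ℕ) : ℝ := (n : ℝ) * ((n : ℝ) - 1) / 2

/-- Sum over unordered pairs `i < j`. -/
def pairSum {n : ℕ} (f : Fin n → Fin n → ℝ) : ℝ :=
  ∑ i : Fin n, ∑ j : Fin n, if i < j then f i j else 0

/-- The pairwise distances `r_{ij}(X) = ‖x_i - x_j‖`. -/
def rdist {n d : ℕ} (X : Fin n → Fin d → ℝ) (i j : Fin n) : ℝ := eDist (X i) (X j)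

/-- The capped dissimilarities `D̃_{ij} = T_M([r⋆_{ij} + σ Z_{ij}]₊)`. -/
def cappedD {n d : ℕ} (σ M : ℝ) (Xstar : Fin n → Fin d → ℝ) (Z : Fin n → Fin n → ℝ)
    (i j : Fin n) : ℝ := capPos M (rdist Xstar i j + σ * Z i j)

/-- The empirical risk `Rₙ(X)`. -/
def empRisk {n d : ℕ} (σ M : ℝ) (Dt : Fin n → Fin n → ℝ) (X : Fin n → Fin d → ℝ) : ℝ :=
  (numPairs n)⁻¹ * pairSum fun i j => lossM σ M (Dt i j) (rdist X i j)

/-- The population risk `Rₙ⁰(X)`. -/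
def popRisk {n d : ℕ} (σ M : ℝ) (Xstar X : Fin n → Fin d → ℝ) : ℝ :=
  (numPairs n)⁻¹ * pairSum fun i j => popLoss σ M (rdist X i j) (rdist Xstar i j)

/-- The distance discrepancy `Δ_dist(X, X⋆)`. -/
def distDiscrep {n d : ℕ} (X Xstar : Fin n → Fin d → ℝ) : ℝ :=
  (numPairs n)⁻¹ * pairSum fun i j => (rdist X i j - rdist Xstar i j) ^ 2

/-- The centering matrix `J = I - n⁻¹ 11ᵀ`. -/
def centerMat (n : ℕ) : Matrix (Fin n) (Fin n) ℝ :=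
  1 - ((n : ℝ)⁻¹) • Matrix.of (fun _ _ => (1 : ℝ))

/-- A configuration viewed as an `n × d` matrix. -/
def toMat {n d : ℕ} (X : Fin n → Fin d → ℝ) : Matrix (Fin n) (Fin d) ℝ := Matrix.of X

/-- The Frobenius norm of a matrix. -/
def frobNorm {m k : Type*} [Fintype m] [Fintype k] (A : Matrix m k ℝ) : ℝ :=
  Real.sqrt (∑ i, ∑ j, (A i j) ^ 2)

/-- The squared-distance matrix `D²(X)`. -/
def sqDistMat {n d : ℕ} (X : Fin n → Fin d → ℝ) : Matrix (Fin n) (Fin n) ℝ :=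
  Matrix.of fun i j => (rdist X i j) ^ 2

/-- The centered Gram matrix `G(X) = -(1/2) J D²(X) J`. -/
def gramMat {n d : ℕ} (X : Fin n → Fin d → ℝ) : Matrix (Fin n) (Fin n) ℝ :=
  (-(1 / 2 : ℝ)) • (centerMat n * sqDistMat X * centerMat n)

/-- The smallest singular value of an `n × d` matrix: the infimum of `‖Av‖` over
unit vectors `v`. -/
def sMin {n d : ℕ} (A : Matrix (Fin n) (Fin d) ℝ) : ℝ :=
  sInf {t | ∃ v : Fin d → ℝ, ∑ k, v k ^ 2 = 1 ∧ t = Real.sqrt (∑ i, (A.mulVec v i) ^ 2)}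

/-- The orbit distance `d_G(X, X⋆)`. -/
def orbitDist {n d : ℕ} (X Xstar : Fin n → Fin d → ℝ) : ℝ :=
  sInf {t | ∃ Q : Matrix (Fin d) (Fin d) ℝ, Q ∈ Matrix.orthogonalGroup (Fin d) ℝ ∧
    t = (Real.sqrt n)⁻¹ *
      frobNorm (centerMat n * toMat X - centerMat n * toMat Xstar * Q)}

/-- The uniform distribution on `[0,1]^d`. -/
def uniformCube (d : ℕ) : Measure (Fin d → ℝ) :=
  Measure.pi fun _ => volume.restrict (Set.Icc 0 1)

/-- The design measure: `n` i.i.d. uniform points on `[0,1]^d`. -/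
def designMeasure (n d : ℕ) : Measure (Fin n → Fin d → ℝ) :=
  Measure.pi fun _ => uniformCube d

/-- The noise measure: i.i.d. standard Gaussian entries. -/
def noiseMeasure (n : ℕ) : Measure (Fin n → Fin n → ℝ) :=
  Measure.pi fun _ => Measure.pi fun _ => stdGaussian

/-- The joint law of `(X⋆, Z)`. -/
def jointMeasure (n d : ℕ) :
    Measure ((Fin n → Fin d → ℝ) × (Fin n → Fin n → ℝ)) :=
  (designMeasure n d).prod (noiseMeasure n)

/-- The prior measure (supported on the cube, with Lebesgue density `π₀`). -/
def priorMeas (d : ℕ) (pri : (n : ℕ) → (Fin n → Fin d → ℝ) → ℝ) (n : ℕ) :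
    Measure (Fin n → Fin d → ℝ) :=
  ((volume : Measure (Fin n → Fin d → ℝ)).restrict (cube n d)).withDensity
    fun X => ENNReal.ofReal (pri n X)

/-- The (normalized) Gibbs measure ∝ `prior(dX) exp(-N R(X))`. -/
def gibbs {S : Type*} [MeasurableSpace S] (prior : Measure S) (R : S → ℝ) (Nn : ℝ) :
    Measure S :=
  ((prior.withDensity fun X => ENNReal.ofReal (Real.exp (-Nn * R X))) Set.univ)⁻¹ •
    prior.withDensity fun X => ENNReal.ofReal (Real.exp (-Nn * R X))

/-- Total variation distance between measures. -/
def tvDist {S : Type*} [MeasurableSpace S] (μ ν : Measure S) : ℝ :=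
  ⨆ A : {A : Set S // MeasurableSet A}, |(μ A).toReal - (ν A).toReal|

/-- `m`-step iterate of a Markov kernel. -/
def kIter {S : Type*} [MeasurableSpace S] (P : Kernel S S) : ℕ → Kernel S S
  | 0 => Kernel.id
  | m + 1 => Kernel.comp P (kIter P m)


lemma stdPDF_pos (x : ℝ) : 0 < stdPDF x := by
  unfold stdPDF
  positivity

lemma stdPDF_nonneg (x : ℝ) : 0 ≤ stdPDF x := (stdPDF_pos x).le

lemma sqrt_two_pi_ge_one : (1:ℝ) ≤ Real.sqrt (2 * Real.pi) := by
  rw [show (1:ℝ) = Real.sqrt 1 by simp]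
  apply Real.sqrt_le_sqrt
  nlinarith [Real.pi_gt_three]

lemma stdPDF_le_one (x : ℝ) : stdPDF x ≤ 1 := by
  unfold stdPDF
  rw [div_le_one (by positivity)]
  calc Real.exp (-(x^2)/2) ≤ Real.exp 0 := by
        apply Real.exp_le_exp.2; nlinarith [sq_nonneg x]
    _ = 1 := Real.exp_zero
    _ ≤ Real.sqrt (2 * Real.pi) := sqrt_two_pi_ge_one

lemma continuous_stdPDF : Continuous stdPDF := by
  unfold stdPDF
  fun_prop

lemma stdPDF_eq_gaussianPDFReal (x : ℝ) : gaussianPDFReal 0 1 x = stdPDF x := by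
  unfold gaussianPDFReal stdPDF
  rw [NNReal.coe_one, mul_one, sub_zero, inv_eq_one_div, one_div_mul_eq_div]
  norm_num

lemma integrable_stdPDF : Integrable stdPDF := by
  have := integrable_gaussianPDFReal 0 1
  simpa [funext stdPDF_eq_gaussianPDFReal] using this

lemma integral_stdPDF : ∫ x, stdPDF x = 1 := by
  have := integral_gaussianPDFReal_eq_one 0 (v := 1) one_ne_zero
  simpa [funext stdPDF_eq_gaussianPDFReal] using this

lemma hasDerivAt_stdPDF (x : ℝ) : HasDerivAt stdPDF (-x * stdPDF x) x := by
  unfold stdPDF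
  have h1 : HasDerivAt (fun y : ℝ => -(y^2)/2) (-x) x := by
    have := (hasDerivAt_pow 2 x).neg.div_const 2
    simpa using this.congr_deriv (by ring)
  have h2 : HasDerivAt (fun y : ℝ => Real.exp (-(y^2)/2)) (Real.exp (-(x^2)/2) * (-x)) x :=
    (Real.hasDerivAt_exp _).comp x h1
  have h3 := h2.div_const (Real.sqrt (2 * Real.pi))
  exact h3.congr_deriv (by ring)

lemma hasDerivAt_stdCDF (x : ℝ) : HasDerivAt stdCDF (stdPDF x) x := by
  have heq : stdCDF = fun u => stdCDF 0 + ∫ t in (0:ℝ)..u, stdPDF t := by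
    funext u
    have h := intervalIntegral.integral_Iic_sub_Iic
      (integrable_stdPDF.integrableOn (s := Set.Iic 0))
      (integrable_stdPDF.integrableOn (s := Set.Iic u))
    unfold stdCDF
    rw [← h]
    ring
  rw [heq]
  have : HasDerivAt (fun u => ∫ t in (0:ℝ)..u, stdPDF t) (stdPDF x) x :=
    intervalIntegral.integral_hasDerivAt_right
      (continuous_stdPDF.intervalIntegrable _ _)
      continuous_stdPDF.aestronglyMeasurable.stronglyMeasurableAtFilter
      continuous_stdPDF.continuousAt
  simpa using this.const_add (stdCDF 0)

lemma stdCDF_mono : Monotone stdCDF := by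
  intro x y hxy
  apply setIntegral_mono_set integrable_stdPDF.integrableOn
    (Filter.Eventually.of_forall fun t => stdPDF_nonneg t)
  exact HasSubset.Subset.eventuallyLE (Set.Iic_subset_Iic.2 hxy)

lemma stdCDF_pos (x : ℝ) : 0 < stdCDF x := by
  unfold stdCDF
  rw [setIntegral_pos_iff_support_of_nonneg_ae
    (Filter.Eventually.of_forall fun t => stdPDF_nonneg t) integrable_stdPDF.integrableOn]
  have : Function.support stdPDF = Set.univ := by
    ext t; simp [Function.support, (stdPDF_pos t).ne']
  rw [this, Set.univ_inter]
  simp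

lemma integral_Iic_add_Ioi_stdPDF (x : ℝ) :
    stdCDF x + ∫ t in Set.Ioi x, stdPDF t = 1 := by
  have := integral_add_compl (measurableSet_Iic (a := x)) integrable_stdPDF
  rw [Set.compl_Iic] at this
  rw [show stdCDF x = ∫ t in Set.Iic x, stdPDF t from rfl, this, integral_stdPDF]

lemma stdCDF_lt_one (x : ℝ) : stdCDF x < 1 := by
  have h := integral_Iic_add_Ioi_stdPDF x
  have hpos : 0 < ∫ t in Set.Ioi x, stdPDF t := by
    rw [setIntegral_pos_iff_support_of_nonneg_ae
      (Filter.Eventually.of_forall fun t => stdPDF_nonneg t) integrable_stdPDF.integrableOn]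
    have : Function.support stdPDF = Set.univ := by
      ext t; simp [Function.support, (stdPDF_pos t).ne']
    rw [this, Set.univ_inter]
    simp
  linarith

lemma stdCDF_le_one (x : ℝ) : stdCDF x ≤ 1 := (stdCDF_lt_one x).le


lemma stdGaussian_eq : _root_.stdGaussian =
    volume.withDensity (fun x => ((Real.toNNReal (stdPDF x) : NNReal) : ENNReal)) := by
  unfold _root_.stdGaussian
  rw [gaussianReal_of_var_ne_zero 0 one_ne_zero]
  congr 1
  funext x
  rw [gaussianPDF, stdPDF_eq_gaussianPDFReal]
  rfl

lemma integral_stdGaussian (g : ℝ → ℝ) :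
    ∫ z, g z ∂stdGaussian = ∫ z, stdPDF z * g z := by
  rw [stdGaussian_eq, integral_withDensity_eq_integral_smul]
  · apply integral_congr_ae
    apply Filter.Eventually.of_forall
    intro x
    simp [NNReal.smul_def, Real.coe_toNNReal _ (stdPDF_nonneg x)]
  · exact (continuous_stdPDF.measurable).real_toNNReal

/-- An instance so that integrals against `stdGaussian` behave. -/
instance : IsProbabilityMeasure stdGaussian := by
  unfold _root_.stdGaussian; infer_instance

lemma integral_piecewise_stdGaussian (a b c₁ c₂ : ℝ) (hab : a < b)
    (u : ℝ → ℝ) (hu : Continuous u) :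
    ∫ z, (if z ≤ a then c₁ else if b ≤ z then c₂ else u z) ∂stdGaussian
      = c₁ * stdCDF a + c₂ * (1 - stdCDF b) + ∫ z in Set.Ioo a b, stdPDF z * u z := by
  set F : ℝ → ℝ := fun z => if z ≤ a then c₁ else if b ≤ z then c₂ else u z with hF
  rw [integral_stdGaussian]
  -- integrability pieces
  have hmeasF : Measurable F := by
    apply Measurable.ite (measurableSet_le measurable_id measurable_const) measurable_const
    exact Measurable.ite (measurableSet_le measurable_const measurable_id) measurable_const
      hu.measurable
  have hint1 : IntegrableOn (fun z => stdPDF z * F z) (Set.Iic a) := by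
    apply (IntegrableOn.congr_fun (integrable_stdPDF.mul_const c₁).integrableOn _
      measurableSet_Iic)
    intro z hz
    simp only [hF, if_pos (Set.mem_Iic.1 hz)]
  have hint2 : IntegrableOn (fun z => stdPDF z * F z) (Set.Ici b) := by
    apply (IntegrableOn.congr_fun (integrable_stdPDF.mul_const c₂).integrableOn _
      measurableSet_Ici)
    intro z hz
    have hz1 : ¬ z ≤ a := by
      have := Set.mem_Ici.1 hz; push_neg; linarith
    simp only [hF, if_neg hz1, if_pos (Set.mem_Ici.1 hz)]
  have hint3 : IntegrableOn (fun z => stdPDF z * u z) (Set.Ioo a b) := by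
    exact ((continuous_stdPDF.mul hu).integrableOn_Icc).mono_set Set.Ioo_subset_Icc_self
  have hint3' : IntegrableOn (fun z => stdPDF z * F z) (Set.Ioo a b) := by
    apply (IntegrableOn.congr_fun hint3 _ measurableSet_Ioo)
    intro z hz
    obtain ⟨h1, h2⟩ := hz
    simp only [hF, if_neg (not_le.2 h1), if_neg (not_le.2 h2)]
  have hIoi : IntegrableOn (fun z => stdPDF z * F z) (Set.Ioi a) := by
    rw [← Set.Ioo_union_Ici_eq_Ioi hab]
    exact hint3'.union hint2
  have hIntF : Integrable (fun z => stdPDF z * F z) := by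
    rw [← integrableOn_univ, ← Set.Iic_union_Ioi (a := a)]
    exact hint1.union hIoi
  have hsplit1 := integral_add_compl (measurableSet_Iic (a := a)) hIntF
  rw [Set.compl_Iic] at hsplit1
  have hdisj : Disjoint (Set.Ioo a b) (Set.Ici b) := by
    rw [Set.disjoint_left]
    rintro z ⟨_, h2⟩ h3
    exact absurd (Set.mem_Ici.1 h3) (not_le.2 h2)
  have hsplit2 : ∫ z in Set.Ioi a, stdPDF z * F z
      = (∫ z in Set.Ioo a b, stdPDF z * F z) + ∫ z in Set.Ici b, stdPDF z * F z := by
    rw [← Set.Ioo_union_Ici_eq_Ioi hab]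
    exact setIntegral_union hdisj measurableSet_Ici hint3' hint2
  have e1 : ∫ z in Set.Iic a, stdPDF z * F z = c₁ * stdCDF a := by
    rw [setIntegral_congr_fun measurableSet_Iic
      (g := fun z => stdPDF z * c₁) (by intro z hz; simp only [hF, if_pos (Set.mem_Iic.1 hz)])]
    rw [integral_mul_const]
    rw [mul_comm]
    rfl
  have e2 : ∫ z in Set.Ici b, stdPDF z * F z = c₂ * (1 - stdCDF b) := by
    rw [setIntegral_congr_fun measurableSet_Ici
      (g := fun z => stdPDF z * c₂) ?_]
    · rw [integral_mul_const, integral_Ici_eq_integral_Ioi]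
      have := integral_Iic_add_Ioi_stdPDF b
      rw [mul_comm]
      congr 1
      linarith
    · intro z hz
      have hz1 : ¬ z ≤ a := by have := Set.mem_Ici.1 hz; push_neg; linarith
      simp only [hF, if_neg hz1, if_pos (Set.mem_Ici.1 hz)]
  have e3 : ∫ z in Set.Ioo a b, stdPDF z * F z = ∫ z in Set.Ioo a b, stdPDF z * u z := by
    apply setIntegral_congr_fun measurableSet_Ioo
    intro z hz
    obtain ⟨h1, h2⟩ := hz
    simp only [hF, if_neg (not_le.2 h1), if_neg (not_le.2 h2)]
  have : (∫ z, stdPDF z * F z) =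
      (∫ z in Set.Iic a, stdPDF z * F z) + ∫ z in Set.Ioi a, stdPDF z * F z := hsplit1.symm
  rw [this, hsplit2, e1, e2, e3]
  ring

lemma integral_Ioo_stdPDF (a b : ℝ) (hab : a ≤ b) :
    ∫ z in Set.Ioo a b, stdPDF z = stdCDF b - stdCDF a := by
  have h := intervalIntegral.integral_Iic_sub_Iic
    (integrable_stdPDF.integrableOn (s := Set.Iic a))
    (integrable_stdPDF.integrableOn (s := Set.Iic b))
  rw [intervalIntegral.integral_of_le hab, integral_Ioc_eq_integral_Ioo] at h
  unfold stdCDF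
  exact h.symm

lemma integral_Ioo_id_stdPDF (a b : ℝ) (hab : a ≤ b) :
    ∫ z in Set.Ioo a b, stdPDF z * z = stdPDF a - stdPDF b := by
  have hderiv : ∀ x ∈ Set.uIcc a b, HasDerivAt (fun y => -stdPDF y) (stdPDF x * x) x := by
    intro x _
    have := (hasDerivAt_stdPDF x).neg
    exact this.congr_deriv (by ring)
  have h := intervalIntegral.integral_eq_sub_of_hasDerivAt hderiv
    ((continuous_stdPDF.mul continuous_id).intervalIntegrable a b)
  rw [intervalIntegral.integral_of_le hab, integral_Ioc_eq_integral_Ioo] at h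
  rw [h]
  ring


lemma lossM_capPos_eq (σ M rs r' : ℝ) (hσ : 0 < σ) (hM : 0 < M) (z : ℝ) :
    lossM σ M (capPos M (rs + σ * z)) r' =
      if z ≤ -rs/σ then -Real.log (stdCDF (-r'/σ))
      else if (M - rs)/σ ≤ z then -Real.log (1 - stdCDF ((M - r')/σ))
      else Real.log σ + Real.log (Real.sqrt (2*Real.pi)) + (z - (r'-rs)/σ)^2/2 := by
  rcases le_or_gt z (-rs/σ) with h1 | h1
  · have hy : rs + σ * z ≤ 0 := by
      have : σ * z ≤ σ * (-rs/σ) := mul_le_mul_of_nonneg_left h1 hσ.le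
      rw [mul_div_cancel₀ _ hσ.ne'] at this
      linarith
    have hcap : capPos M (rs + σ * z) = 0 := by
      unfold capPos; rw [max_eq_right hy, min_eq_right hM.le]
    rw [if_pos h1, hcap]
    unfold lossM qDen
    rw [if_pos rfl]
  · rw [if_neg (not_le.2 h1)]
    rcases le_or_gt ((M - rs)/σ) z with h2 | h2
    · have hy : M ≤ rs + σ * z := by
        have : σ * ((M - rs)/σ) ≤ σ * z := mul_le_mul_of_nonneg_left h2 hσ.le
        rw [mul_div_cancel₀ _ hσ.ne'] at this
        linarith
      have hcap : capPos M (rs + σ * z) = M := by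
        unfold capPos; rw [max_eq_left (le_trans hM.le hy), min_eq_left hy]
      rw [if_pos h2, hcap]
      unfold lossM qDen
      rw [if_neg hM.ne', if_pos rfl]
    · rw [if_neg (not_le.2 h2)]
      have hy1 : 0 < rs + σ * z := by
        have : σ * (-rs/σ) < σ * z := (mul_lt_mul_iff_right₀ hσ).2 h1
        rw [mul_div_cancel₀ _ hσ.ne'] at this
        linarith
      have hy2 : rs + σ * z < M := by
        have : σ * z < σ * ((M - rs)/σ) := (mul_lt_mul_iff_right₀ hσ).2 h2
        rw [mul_div_cancel₀ _ hσ.ne'] at this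
        linarith
      have hcap : capPos M (rs + σ * z) = rs + σ * z := by
        unfold capPos; rw [max_eq_left hy1.le, min_eq_right hy2.le]
      rw [hcap]
      unfold lossM qDen
      rw [if_neg hy1.ne', if_neg hy2.ne]
      have harg : (rs + σ * z - r')/σ = z - (r'-rs)/σ := by
        field_simp
        ring
      rw [harg]
      rw [Real.log_mul (inv_ne_zero hσ.ne') (stdPDF_pos _).ne', Real.log_inv]
      unfold stdPDF
      rw [Real.log_div (Real.exp_ne_zero _) (by positivity), Real.log_exp]
      ring

lemma popLoss_eq (σ M rs r' : ℝ) (hσ : 0 < σ) (hM : 0 < M) :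
    popLoss σ M r' rs =
      (-Real.log (stdCDF (-r'/σ))) * stdCDF (-rs/σ)
      + (-Real.log (1 - stdCDF ((M - r')/σ))) * (1 - stdCDF ((M - rs)/σ))
      + ∫ z in Set.Ioo (-rs/σ) ((M - rs)/σ),
          stdPDF z * (Real.log σ + Real.log (Real.sqrt (2*Real.pi)) + (z - (r'-rs)/σ)^2/2) := by
  have hab : -rs/σ < (M - rs)/σ := by
    apply div_lt_div_of_pos_right _ hσ
    linarith
  unfold popLoss
  rw [show (fun z => lossM σ M (capPos M (rs + σ * z)) r') = fun z =>
      if z ≤ -rs/σ then -Real.log (stdCDF (-r'/σ))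
      else if (M - rs)/σ ≤ z then -Real.log (1 - stdCDF ((M - r')/σ))
      else Real.log σ + Real.log (Real.sqrt (2*Real.pi)) + (z - (r'-rs)/σ)^2/2
    from funext fun z => lossM_capPos_eq σ M rs r' hσ hM z]
  rw [integral_piecewise_stdGaussian _ _ _ _ hab _ (by fun_prop)]

lemma popLoss_diff_eq (σ M rs r : ℝ) (hσ : 0 < σ) (hM : 0 < M) :
    popLoss σ M r rs - popLoss σ M rs rs =
      stdCDF (-rs/σ) * (Real.log (stdCDF (-rs/σ)) - Real.log (stdCDF (-rs/σ - (r-rs)/σ)))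
      + (1 - stdCDF ((M-rs)/σ)) *
          (Real.log (1 - stdCDF ((M-rs)/σ)) - Real.log (1 - stdCDF ((M-rs)/σ - (r-rs)/σ)))
      + ((r-rs)/σ)^2/2 * (stdCDF ((M-rs)/σ) - stdCDF (-rs/σ))
      - ((r-rs)/σ) * (stdPDF (-rs/σ) - stdPDF ((M-rs)/σ)) := by
  have hab : -rs/σ < (M - rs)/σ := by
    apply div_lt_div_of_pos_right _ hσ
    linarith
  have e1 := popLoss_eq σ M rs r hσ hM
  have e2 := popLoss_eq σ M rs rs hσ hM
  rw [show -r/σ = -rs/σ - (r-rs)/σ from by ring,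
      show (M - r)/σ = (M-rs)/σ - (r-rs)/σ from by ring] at e1
  have hint1 : IntegrableOn (fun z => stdPDF z *
      (Real.log σ + Real.log (Real.sqrt (2*Real.pi)) + (z - (r-rs)/σ)^2/2))
      (Set.Ioo (-rs/σ) ((M - rs)/σ)) := by
    exact ((continuous_stdPDF.mul (by fun_prop)).integrableOn_Icc).mono_set
      Set.Ioo_subset_Icc_self
  have hint2 : IntegrableOn (fun z => stdPDF z *
      (Real.log σ + Real.log (Real.sqrt (2*Real.pi)) + (z - (rs-rs)/σ)^2/2))
      (Set.Ioo (-rs/σ) ((M - rs)/σ)) := by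
    exact ((continuous_stdPDF.mul (by fun_prop)).integrableOn_Icc).mono_set
      Set.Ioo_subset_Icc_self
  have hintz : IntegrableOn (fun z => (r-rs)/σ * (stdPDF z * z))
      (Set.Ioo (-rs/σ) ((M - rs)/σ)) := by
    exact Integrable.const_mul (((continuous_stdPDF.mul continuous_id).integrableOn_Icc).mono_set
      Set.Ioo_subset_Icc_self) _
  have hintc : IntegrableOn (fun z => ((r-rs)/σ)^2/2 * stdPDF z)
      (Set.Ioo (-rs/σ) ((M - rs)/σ)) :=
    integrable_stdPDF.integrableOn.const_mul _
  have hsub : (∫ z in Set.Ioo (-rs/σ) ((M - rs)/σ),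
        stdPDF z * (Real.log σ + Real.log (Real.sqrt (2*Real.pi)) + (z - (r-rs)/σ)^2/2))
      - (∫ z in Set.Ioo (-rs/σ) ((M - rs)/σ),
        stdPDF z * (Real.log σ + Real.log (Real.sqrt (2*Real.pi)) + (z - (rs-rs)/σ)^2/2))
      = ((r-rs)/σ)^2/2 * (stdCDF ((M-rs)/σ) - stdCDF (-rs/σ))
        - ((r-rs)/σ) * (stdPDF (-rs/σ) - stdPDF ((M-rs)/σ)) := by
    rw [← integral_sub hint1 hint2]
    have : ∀ z : ℝ, stdPDF z * (Real.log σ + Real.log (Real.sqrt (2*Real.pi)) + (z - (r-rs)/σ)^2/2)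
        - stdPDF z * (Real.log σ + Real.log (Real.sqrt (2*Real.pi)) + (z - (rs-rs)/σ)^2/2)
        = ((r-rs)/σ)^2/2 * stdPDF z - (r-rs)/σ * (stdPDF z * z) := by
      intro z; ring
    rw [integral_congr_ae (Filter.Eventually.of_forall fun z => this z)]
    rw [integral_sub hintc hintz, integral_const_mul, integral_const_mul,
      integral_Ioo_stdPDF _ _ hab.le, integral_Ioo_id_stdPDF _ _ hab.le]
  rw [e1, e2]
  linear_combination hsub


def hz (x : ℝ) : ℝ := stdPDF x / stdCDF x

def hbar (x : ℝ) : ℝ := stdPDF x / (1 - stdCDF x)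

lemma one_sub_stdCDF_pos (x : ℝ) : 0 < 1 - stdCDF x := by
  have := stdCDF_lt_one x; linarith

lemma hasDerivAt_hz (x : ℝ) : HasDerivAt hz
    ((-x * stdPDF x * stdCDF x - stdPDF x * stdPDF x) / stdCDF x ^ 2) x := by
  have := (hasDerivAt_stdPDF x).div (hasDerivAt_stdCDF x) (stdCDF_pos x).ne'
  exact this.congr_deriv (by ring)

lemma hasDerivAt_hbar (x : ℝ) : HasDerivAt hbar
    ((-x * stdPDF x * (1 - stdCDF x) + stdPDF x * stdPDF x) / (1 - stdCDF x) ^ 2) x := by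
  have h1 : HasDerivAt (fun y => 1 - stdCDF y) (-stdPDF x) x :=
    (hasDerivAt_stdCDF x).const_sub 1
  have := (hasDerivAt_stdPDF x).div h1 (one_sub_stdCDF_pos x).ne'
  exact this.congr_deriv (by ring)

lemma hz_deriv_bound {A x : ℝ} (hA : 0 < A) (hx : x ∈ Set.Icc (-A) A) :
    |(-x * stdPDF x * stdCDF x - stdPDF x * stdPDF x) / stdCDF x ^ 2|
      ≤ (A + 1) / stdCDF (-A) ^ 2 := by
  obtain ⟨hx1, hx2⟩ := hx
  have hφ := stdPDF_pos x
  have hφ1 := stdPDF_le_one x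
  have hΦ := stdCDF_pos x
  have hΦ1 := stdCDF_le_one x
  have hΦA := stdCDF_pos (-A)
  have hmono : stdCDF (-A) ≤ stdCDF x := stdCDF_mono hx1
  have ht0 : 0 ≤ stdPDF x * stdCDF x := by positivity
  have ht1 : stdPDF x * stdCDF x ≤ 1 := by nlinarith
  have hφsq : stdPDF x * stdPDF x ≤ 1 := by nlinarith
  rw [abs_div, abs_of_nonneg (by positivity : (0:ℝ) ≤ stdCDF x ^ 2)]
  apply div_le_div₀ (by linarith) _ (by positivity) (by nlinarith)
  rw [abs_le]
  constructor
  · nlinarith [mul_nonneg (by linarith : (0:ℝ) ≤ A - x) ht0,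
      mul_nonneg hA.le (by linarith : (0:ℝ) ≤ 1 - stdPDF x * stdCDF x)]
  · nlinarith [mul_nonneg (by linarith : (0:ℝ) ≤ A + x) ht0,
      mul_nonneg hA.le (by linarith : (0:ℝ) ≤ 1 - stdPDF x * stdCDF x)]

lemma hbar_deriv_bound {A x : ℝ} (hA : 0 < A) (hx : x ∈ Set.Icc (-A) A) :
    |(-x * stdPDF x * (1 - stdCDF x) + stdPDF x * stdPDF x) / (1 - stdCDF x) ^ 2|
      ≤ (A + 1) / (1 - stdCDF A) ^ 2 := by
  obtain ⟨hx1, hx2⟩ := hx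
  have hφ := stdPDF_pos x
  have hφ1 := stdPDF_le_one x
  have hΦ := one_sub_stdCDF_pos x
  have hΦ1 : 1 - stdCDF x ≤ 1 := by have := stdCDF_pos x; linarith
  have hΦA := one_sub_stdCDF_pos A
  have hmono : 1 - stdCDF A ≤ 1 - stdCDF x := by linarith [stdCDF_mono hx2]
  have ht0 : 0 ≤ stdPDF x * (1 - stdCDF x) := by positivity
  have ht1 : stdPDF x * (1 - stdCDF x) ≤ 1 := by nlinarith
  have hφsq : stdPDF x * stdPDF x ≤ 1 := by nlinarith
  rw [abs_div, abs_of_nonneg (by positivity : (0:ℝ) ≤ (1 - stdCDF x) ^ 2)]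
  apply div_le_div₀ (by linarith) _ (by positivity) (by nlinarith)
  rw [abs_le]
  constructor
  · nlinarith [mul_nonneg (by linarith : (0:ℝ) ≤ A - x) ht0,
      mul_nonneg hA.le (by linarith : (0:ℝ) ≤ 1 - stdPDF x * (1 - stdCDF x))]
  · nlinarith [mul_nonneg (by linarith : (0:ℝ) ≤ A + x) ht0,
      mul_nonneg hA.le (by linarith : (0:ℝ) ≤ 1 - stdPDF x * (1 - stdCDF x))]

lemma hz_lipschitz {A : ℝ} (hA : 0 < A) {x y : ℝ}
    (hx : x ∈ Set.Icc (-A) A) (hy : y ∈ Set.Icc (-A) A) :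
    |hz x - hz y| ≤ ((A + 1) / stdCDF (-A) ^ 2) * |x - y| := by
  have := (convex_Icc (-A) A).norm_image_sub_le_of_norm_hasDerivWithin_le
    (f := hz) (f' := fun x => (-x * stdPDF x * stdCDF x - stdPDF x * stdPDF x) / stdCDF x ^ 2)
    (C := (A + 1) / stdCDF (-A) ^ 2)
    (fun z _ => (hasDerivAt_hz z).hasDerivWithinAt)
    (fun z hzm => by rw [Real.norm_eq_abs]; exact hz_deriv_bound hA hzm) hy hx
  rw [Real.norm_eq_abs, Real.norm_eq_abs] at this
  exact this

lemma hbar_lipschitz {A : ℝ} (hA : 0 < A) {x y : ℝ}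
    (hx : x ∈ Set.Icc (-A) A) (hy : y ∈ Set.Icc (-A) A) :
    |hbar x - hbar y| ≤ ((A + 1) / (1 - stdCDF A) ^ 2) * |x - y| := by
  have := (convex_Icc (-A) A).norm_image_sub_le_of_norm_hasDerivWithin_le
    (f := hbar)
    (f' := fun x => (-x * stdPDF x * (1 - stdCDF x) + stdPDF x * stdPDF x) / (1 - stdCDF x) ^ 2)
    (C := (A + 1) / (1 - stdCDF A) ^ 2)
    (fun z _ => (hasDerivAt_hbar z).hasDerivWithinAt)
    (fun z hzm => by rw [Real.norm_eq_abs]; exact hbar_deriv_bound hA hzm) hy hx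
  rw [Real.norm_eq_abs, Real.norm_eq_abs] at this
  exact this

/-- Generic second-order MVT bound. -/
lemma quad_bound {F F' : ℝ → ℝ} {L δ : ℝ} (hF0 : F 0 = 0)
    (hF' : ∀ t ∈ Set.uIcc 0 δ, HasDerivAt F (F' t) t)
    (hbd : ∀ t ∈ Set.uIcc 0 δ, |F' t| ≤ L * |δ|) : |F δ| ≤ L * δ^2 := by
  have := (convex_uIcc 0 δ).norm_image_sub_le_of_norm_hasDerivWithin_le
    (f := F) (f' := F') (C := L * |δ|)
    (fun t ht => (hF' t ht).hasDerivWithinAt)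
    (fun t ht => by rw [Real.norm_eq_abs]; exact hbd t ht)
    Set.left_mem_uIcc Set.right_mem_uIcc
  rw [hF0, sub_zero, sub_zero, Real.norm_eq_abs, Real.norm_eq_abs] at this
  calc |F δ| ≤ L * |δ| * |δ| := this
    _ = L * (|δ| * |δ|) := by ring
    _ = L * (δ * δ) := by rw [abs_mul_abs_self]
    _ = L * δ^2 := by ring

lemma mem_Icc_sub {A a δ t : ℝ} (ha : a ∈ Set.Icc (-A) A) (haδ : a - δ ∈ Set.Icc (-A) A)
    (ht : t ∈ Set.uIcc 0 δ) : a - t ∈ Set.Icc (-A) A := by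
  obtain ⟨h1, h2⟩ := ha
  obtain ⟨h3, h4⟩ := haδ
  rcases le_total 0 δ with h | h
  · rw [Set.uIcc_of_le h] at ht
    obtain ⟨h5, h6⟩ := ht
    constructor <;> linarith
  · rw [Set.uIcc_of_ge h] at ht
    obtain ⟨h5, h6⟩ := ht
    constructor <;> linarith

lemma abs_le_abs_of_uIcc {δ t : ℝ} (ht : t ∈ Set.uIcc 0 δ) : |t| ≤ |δ| := by
  rcases le_total 0 δ with h | h
  · rw [Set.uIcc_of_le h] at ht
    rw [abs_of_nonneg ht.1, abs_of_nonneg h]; exact ht.2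
  · rw [Set.uIcc_of_ge h] at ht
    rw [abs_of_nonpos ht.2, abs_of_nonpos h]; linarith [ht.1]

lemma low_atom_bound {A : ℝ} (hA : 0 < A) {a δ : ℝ}
    (ha : a ∈ Set.Icc (-A) A) (haδ : a - δ ∈ Set.Icc (-A) A) :
    stdCDF a * (Real.log (stdCDF a) - Real.log (stdCDF (a - δ)))
      ≤ δ * stdPDF a + ((A + 1) / stdCDF (-A) ^ 2) * δ^2 := by
  set L := (A + 1) / stdCDF (-A) ^ 2 with hL
  set F : ℝ → ℝ := fun t => Real.log (stdCDF a) - Real.log (stdCDF (a - t)) - t * hz a with hF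
  have hF0 : F 0 = 0 := by simp [hF]
  have hFd : ∀ t, HasDerivAt F (hz (a - t) - hz a) t := by
    intro t
    have h1 : HasDerivAt (fun t : ℝ => a - t) (-1) t := by
      simpa using (hasDerivAt_id t).const_sub a
    have h2 : HasDerivAt (fun t : ℝ => stdCDF (a - t)) (stdPDF (a - t) * (-1)) t :=
      (hasDerivAt_stdCDF (a - t)).comp t h1
    have h3 : HasDerivAt (fun t : ℝ => Real.log (stdCDF (a - t)))
        ((stdPDF (a - t) * (-1)) / stdCDF (a - t)) t := h2.log (stdCDF_pos _).ne'
    have h4 : HasDerivAt (fun t : ℝ => t * hz a) (hz a) t := by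
      simpa using (hasDerivAt_id t).mul_const (hz a)
    have := (h3.const_sub (Real.log (stdCDF a))).sub h4
    refine this.congr_deriv ?_
    unfold hz
    field_simp
  have hbd : ∀ t ∈ Set.uIcc 0 δ, |hz (a - t) - hz a| ≤ L * |δ| := by
    intro t ht
    calc |hz (a - t) - hz a| ≤ L * |a - t - a| :=
          hz_lipschitz hA (mem_Icc_sub ha haδ ht) ha
      _ ≤ L * |δ| := by
          apply mul_le_mul_of_nonneg_left _ (by positivity)
          rw [show a - t - a = -t by ring, abs_neg]
          exact abs_le_abs_of_uIcc ht
  have hquad : |F δ| ≤ L * δ^2 := quad_bound hF0 (fun t _ => hFd t) hbd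
  have hhza : stdCDF a * hz a = stdPDF a := by
    unfold hz; rw [mul_comm, div_mul_cancel₀ _ (stdCDF_pos a).ne']
  have hkey : stdCDF a * (Real.log (stdCDF a) - Real.log (stdCDF (a - δ)))
      = stdCDF a * F δ + δ * stdPDF a := by
    simp only [hF]
    linear_combination δ * hhza
  rw [hkey]
  have h1 : stdCDF a * F δ ≤ L * δ^2 := by
    calc stdCDF a * F δ ≤ stdCDF a * |F δ| :=
          mul_le_mul_of_nonneg_left (le_abs_self _) (stdCDF_pos a).le
      _ ≤ 1 * |F δ| := mul_le_mul_of_nonneg_right (stdCDF_le_one a) (abs_nonneg _)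
      _ = |F δ| := one_mul _
      _ ≤ L * δ^2 := hquad
  linarith

lemma high_atom_bound {A : ℝ} (hA : 0 < A) {b δ : ℝ}
    (hb : b ∈ Set.Icc (-A) A) (hbδ : b - δ ∈ Set.Icc (-A) A) :
    (1 - stdCDF b) * (Real.log (1 - stdCDF b) - Real.log (1 - stdCDF (b - δ)))
      ≤ -(δ * stdPDF b) + ((A + 1) / (1 - stdCDF A) ^ 2) * δ^2 := by
  set L := (A + 1) / (1 - stdCDF A) ^ 2 with hL
  set F : ℝ → ℝ := fun t =>
    Real.log (1 - stdCDF b) - Real.log (1 - stdCDF (b - t)) + t * hbar b with hF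
  have hF0 : F 0 = 0 := by simp [hF]
  have hFd : ∀ t, HasDerivAt F (-(hbar (b - t)) + hbar b) t := by
    intro t
    have h1 : HasDerivAt (fun t : ℝ => b - t) (-1) t := by
      simpa using (hasDerivAt_id t).const_sub b
    have h2 : HasDerivAt (fun t : ℝ => 1 - stdCDF (b - t)) (-(stdPDF (b - t) * (-1))) t :=
      (((hasDerivAt_stdCDF (b - t)).comp t h1)).const_sub 1
    have h3 : HasDerivAt (fun t : ℝ => Real.log (1 - stdCDF (b - t)))
        ((-(stdPDF (b - t) * (-1))) / (1 - stdCDF (b - t))) t :=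
      h2.log (one_sub_stdCDF_pos _).ne'
    have h4 : HasDerivAt (fun t : ℝ => t * hbar b) (hbar b) t := by
      simpa using (hasDerivAt_id t).mul_const (hbar b)
    have := (h3.const_sub (Real.log (1 - stdCDF b))).add h4
    refine this.congr_deriv ?_
    unfold hbar
    have := (one_sub_stdCDF_pos (b - t)).ne'
    field_simp
  have hbd : ∀ t ∈ Set.uIcc 0 δ, |(-(hbar (b - t)) + hbar b)| ≤ L * |δ| := by
    intro t ht
    have heq : |(-(hbar (b - t)) + hbar b)| = |hbar (b - t) - hbar b| := by
      rw [← abs_neg]; congr 1; ring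
    rw [heq]
    calc |hbar (b - t) - hbar b| ≤ L * |b - t - b| :=
          hbar_lipschitz hA (mem_Icc_sub hb hbδ ht) hb
      _ ≤ L * |δ| := by
          apply mul_le_mul_of_nonneg_left _ (by positivity)
          rw [show b - t - b = -t by ring, abs_neg]
          exact abs_le_abs_of_uIcc ht
  have hquad : |F δ| ≤ L * δ^2 := quad_bound hF0 (fun t _ => hFd t) hbd
  have hhb : (1 - stdCDF b) * hbar b = stdPDF b := by
    unfold hbar; rw [mul_comm, div_mul_cancel₀ _ (one_sub_stdCDF_pos b).ne']
  have hkey : (1 - stdCDF b) * (Real.log (1 - stdCDF b) - Real.log (1 - stdCDF (b - δ)))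
      = (1 - stdCDF b) * F δ - δ * stdPDF b := by
    simp only [hF]
    linear_combination (-δ) * hhb
  rw [hkey]
  have h1 : (1 - stdCDF b) * F δ ≤ L * δ^2 := by
    calc (1 - stdCDF b) * F δ ≤ (1 - stdCDF b) * |F δ| :=
          mul_le_mul_of_nonneg_left (le_abs_self _) (one_sub_stdCDF_pos b).le
      _ ≤ 1 * |F δ| := by
          apply mul_le_mul_of_nonneg_right _ (abs_nonneg _)
          have := stdCDF_pos b; linarith
      _ = |F δ| := one_mul _
      _ ≤ L * δ^2 := hquad
  linarith

lemma lemmaA (d : ℕ) (σ M : ℝ) (hσ : 0 < σ) (hd : 1 ≤ d) (hM : Real.sqrt d ≤ M) :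
    ∃ C1 : ℝ, 0 < C1 ∧ ∀ r rs : ℝ, r ∈ Set.Icc 0 (Real.sqrt d) → rs ∈ Set.Icc 0 (Real.sqrt d) →
      popLoss σ M r rs - popLoss σ M rs rs ≤ C1 * (r - rs)^2 := by
  have hsd : (1:ℝ) ≤ Real.sqrt d := by
    rw [show (1:ℝ) = Real.sqrt 1 by simp]
    apply Real.sqrt_le_sqrt
    exact_mod_cast hd
  have hsd0 : (0:ℝ) ≤ Real.sqrt d := by linarith
  have hM0 : 0 < M := by linarith
  set A : ℝ := (M + 2 * Real.sqrt d) / σ + 1 with hA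
  have hApos : 0 < A := by positivity
  set L : ℝ := (A + 1) / stdCDF (-A) ^ 2 + (A + 1) / (1 - stdCDF A) ^ 2 with hLdef
  have hL1 : 0 < (A + 1) / stdCDF (-A) ^ 2 := by
    apply div_pos (by linarith)
    exact pow_pos (stdCDF_pos _) 2
  have hL2 : 0 < (A + 1) / (1 - stdCDF A) ^ 2 := by
    apply div_pos (by linarith)
    exact pow_pos (one_sub_stdCDF_pos _) 2
  have hLpos : 0 < L := by rw [hLdef]; linarith
  refine ⟨(2 * L + 1/2) / σ^2, by positivity, ?_⟩
  intro r rs hr hrs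
  obtain ⟨hr0, hr1⟩ := hr
  obtain ⟨hrs0, hrs1⟩ := hrs
  rw [popLoss_diff_eq σ M rs r hσ hM0]
  have hσA : σ * A = M + 2 * Real.sqrt d + σ := by
    rw [hA]; field_simp
  have key : ∀ y : ℝ, -(M + 2 * Real.sqrt d) ≤ y → y ≤ M + 2 * Real.sqrt d →
      y / σ ∈ Set.Icc (-A) A := by
    intro y h1 h2
    constructor
    · rw [le_div_iff₀ hσ]
      nlinarith
    · rw [div_le_iff₀ hσ]
      nlinarith
  set a : ℝ := -rs/σ with ha
  set b : ℝ := (M - rs)/σ with hb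
  set δ : ℝ := (r - rs)/σ with hδ
  have hmema : a ∈ Set.Icc (-A) A := key (-rs) (by linarith) (by linarith)
  have hmemaδ : a - δ ∈ Set.Icc (-A) A := by
    rw [show a - δ = -r/σ by rw [ha, hδ]; ring]
    exact key (-r) (by linarith) (by linarith)
  have hmemb : b ∈ Set.Icc (-A) A := key (M - rs) (by linarith) (by linarith)
  have hmembδ : b - δ ∈ Set.Icc (-A) A := by
    rw [show b - δ = (M - r)/σ by rw [hb, hδ]; ring]
    exact key (M - r) (by linarith) (by linarith)
  have low := low_atom_bound hApos hmema hmemaδ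
  have high := high_atom_bound hApos hmemb hmembδ
  have hmid : δ^2/2 * (stdCDF b - stdCDF a) ≤ δ^2/2 := by
    nlinarith [stdCDF_pos a, stdCDF_le_one b, sq_nonneg δ]
  have hbump1 : ((A + 1) / stdCDF (-A) ^ 2) * δ^2 ≤ L * δ^2 := by
    apply mul_le_mul_of_nonneg_right _ (sq_nonneg δ)
    rw [hLdef]; linarith
  have hbump2 : ((A + 1) / (1 - stdCDF A) ^ 2) * δ^2 ≤ L * δ^2 := by
    apply mul_le_mul_of_nonneg_right _ (sq_nonneg δ)
    rw [hLdef]; linarith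
  calc stdCDF a * (Real.log (stdCDF a) - Real.log (stdCDF (a - δ)))
      + (1 - stdCDF b) * (Real.log (1 - stdCDF b) - Real.log (1 - stdCDF (b - δ)))
      + δ^2/2 * (stdCDF b - stdCDF a) - δ * (stdPDF a - stdPDF b)
      ≤ (2 * L + 1/2) * δ^2 := by linarith
    _ = (2 * L + 1/2) / σ^2 * (r - rs)^2 := by
        rw [hδ]
        field_simp
        try ring


section PartB

lemma sqrt_sum_sq_eq_norm {d : ℕ} (v : Fin d → ℝ) :
    Real.sqrt (∑ k, v k ^ 2) = ‖(WithLp.equiv 2 (Fin d → ℝ)).symm v‖ := by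
  rw [EuclideanSpace.norm_eq]
  congr 1
  apply Finset.sum_congr rfl
  intro k _
  rw [Real.norm_eq_abs, sq_abs]
  rfl

lemma sum_sq_vecMul {d : ℕ} (Q : Matrix (Fin d) (Fin d) ℝ)
    (hQ : Q ∈ Matrix.orthogonalGroup (Fin d) ℝ) (v : Fin d → ℝ) :
    ∑ k, (∑ l, v l * Q l k) ^ 2 = ∑ k, v k ^ 2 := by
  have hQQ : Q * star Q = 1 := (Matrix.mem_orthogonalGroup_iff (Fin d) ℝ).1 hQ
  have hentry : ∀ l m, ∑ k, Q l k * Q m k = if l = m then (1:ℝ) else 0 := by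
    intro l m
    have h := Matrix.ext_iff.2 hQQ l m
    simp only [Matrix.mul_apply, Matrix.star_apply, star_trivial, Matrix.one_apply] at h
    exact h
  calc ∑ k, (∑ l, v l * Q l k) ^ 2
      = ∑ k, ∑ l, ∑ m, (v l * Q l k) * (v m * Q m k) := by
        apply Finset.sum_congr rfl
        intro k _
        rw [sq, Finset.sum_mul_sum]
    _ = ∑ l, ∑ m, (v l * v m) * (∑ k, Q l k * Q m k) := by
        rw [Finset.sum_comm]
        apply Finset.sum_congr rfl
        intro l _
        rw [Finset.sum_comm]
        apply Finset.sum_congr rfl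
        intro m _
        rw [Finset.mul_sum]
        apply Finset.sum_congr rfl
        intro k _
        ring
    _ = ∑ l, (v l * v l) * 1 := by
        apply Finset.sum_congr rfl
        intro l _
        rw [Finset.sum_eq_single l]
        · rw [hentry l l, if_pos rfl]
        · intro m _ hm
          rw [hentry l m, if_neg (Ne.symm hm), mul_zero]
        · intro h
          exact absurd (Finset.mem_univ l) h
    _ = ∑ k, v k ^ 2 := by
        apply Finset.sum_congr rfl
        intro k _
        ring

lemma centerMat_apply {n : ℕ} (i l : Fin n) :
    centerMat n i l = (if i = l then (1:ℝ) else 0) - (n:ℝ)⁻¹ := by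
  unfold centerMat
  rw [Matrix.sub_apply, Matrix.smul_apply, Matrix.one_apply]
  simp only [Matrix.of_apply, smul_eq_mul, mul_one]

lemma centerMat_row_diff {n d : ℕ} (B : Matrix (Fin n) (Fin d) ℝ) (i j : Fin n) (k : Fin d) :
    (centerMat n * B) i k - (centerMat n * B) j k = B i k - B j k := by
  have hrow : ∀ i' : Fin n, (centerMat n * B) i' k = B i' k - (n:ℝ)⁻¹ * ∑ l, B l k := by
    intro i'
    rw [Matrix.mul_apply]
    have hterm : ∀ l, centerMat n i' l * B l k
        = (if i' = l then B l k else 0) - (n:ℝ)⁻¹ * B l k := by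
      intro l
      rw [centerMat_apply]
      split_ifs <;> ring
    rw [Finset.sum_congr rfl (fun l _ => hterm l), Finset.sum_sub_distrib]
    rw [Finset.sum_ite_eq (Finset.univ : Finset (Fin n)) i' (fun l => B l k)]
    rw [if_pos (Finset.mem_univ i'), ← Finset.mul_sum]
  rw [hrow i, hrow j]
  ring

lemma pairSum_mono {n : ℕ} {f g : Fin n → Fin n → ℝ}
    (h : ∀ i j, i < j → f i j ≤ g i j) : pairSum f ≤ pairSum g := by
  unfold pairSum
  apply Finset.sum_le_sum
  intro i _
  apply Finset.sum_le_sum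
  intro j _
  split_ifs with hij
  · exact h i j hij
  · exact le_refl 0

lemma pairSum_sub {n : ℕ} (f g : Fin n → Fin n → ℝ) :
    pairSum f - pairSum g = pairSum fun i j => f i j - g i j := by
  unfold pairSum
  rw [← Finset.sum_sub_distrib]
  apply Finset.sum_congr rfl
  intro i _
  rw [← Finset.sum_sub_distrib]
  apply Finset.sum_congr rfl
  intro j _
  split_ifs with hij
  · rfl
  · ring

lemma pairSum_const_mul {n : ℕ} (c : ℝ) (f : Fin n → Fin n → ℝ) :
    pairSum (fun i j => c * f i j) = c * pairSum f := by
  unfold pairSum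
  rw [Finset.mul_sum]
  apply Finset.sum_congr rfl
  intro i _
  rw [Finset.mul_sum]
  apply Finset.sum_congr rfl
  intro j _
  split_ifs with hij
  · rfl
  · rw [mul_zero]

lemma pairSum_eq_zero_of_le_one {n : ℕ} (hn : n ≤ 1) (f : Fin n → Fin n → ℝ) :
    pairSum f = 0 := by
  unfold pairSum
  apply Finset.sum_eq_zero
  intro i _
  apply Finset.sum_eq_zero
  intro j _
  rw [if_neg]
  rw [Fin.lt_def]
  have hi := i.2
  have hj := j.2
  omega

lemma numPairs_nonneg (n : ℕ) : 0 ≤ numPairs n := by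
  unfold numPairs
  rcases Nat.eq_zero_or_pos n with h | h
  · simp [h]
  · have : (1:ℝ) ≤ (n:ℝ) := by exact_mod_cast h
    nlinarith

lemma frobNorm_nonneg {m k : Type*} [Fintype m] [Fintype k] (A : Matrix m k ℝ) :
    0 ≤ frobNorm A := Real.sqrt_nonneg _

lemma distDiscrep_le_frob {n d : ℕ} (X Xstar : Fin n → Fin d → ℝ)
    (Q : Matrix (Fin d) (Fin d) ℝ) (hQ : Q ∈ Matrix.orthogonalGroup (Fin d) ℝ) :
    distDiscrep X Xstar ≤
      16 * ((Real.sqrt n)⁻¹ *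
        frobNorm (centerMat n * toMat X - centerMat n * toMat Xstar * Q)) ^ 2 := by
  set A : Matrix (Fin n) (Fin d) ℝ := centerMat n * toMat X - centerMat n * toMat Xstar * Q
    with hA
  set v : Fin n → ℝ := fun i => ∑ k, (A i k)^2 with hv
  have hv0 : ∀ i, 0 ≤ v i := fun i => Finset.sum_nonneg fun k _ => sq_nonneg _
  set S : ℝ := ∑ i, v i with hS
  have hS0 : 0 ≤ S := Finset.sum_nonneg fun i _ => hv0 i
  have hfrob : frobNorm A ^ 2 = S := by
    unfold frobNorm
    rw [Real.sq_sqrt (by positivity)]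
  have hRHS : 16 * ((Real.sqrt n)⁻¹ * frobNorm A) ^ 2 = 16 * (S * ((n:ℝ))⁻¹) := by
    rw [mul_pow, inv_pow, Real.sq_sqrt (Nat.cast_nonneg n), hfrob]
    ring
  rcases le_or_gt n 1 with hn | hn
  · -- degenerate case
    unfold distDiscrep
    rw [pairSum_eq_zero_of_le_one hn, mul_zero, hRHS]
    positivity
  · have hn2 : (2:ℝ) ≤ (n:ℝ) := by exact_mod_cast hn
    -- per-pair bound
    have hpair : ∀ i j : Fin n, (rdist X i j - rdist Xstar i j)^2 ≤ 2 * v i + 2 * v j := by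
      intro i j
      set Y : Matrix (Fin n) (Fin d) ℝ := toMat Xstar * Q with hY
      have hYd : ∀ k, Y i k - Y j k = ∑ l, (Xstar i l - Xstar j l) * Q l k := by
        intro k
        rw [hY, Matrix.mul_apply, Matrix.mul_apply, ← Finset.sum_sub_distrib]
        apply Finset.sum_congr rfl
        intro l _
        simp only [toMat, Matrix.of_apply]
        ring
      have hstep : ∑ k, (Y i k - Y j k)^2 = ∑ k, (Xstar i k - Xstar j k)^2 := by
        calc ∑ k, (Y i k - Y j k)^2
            = ∑ k, (∑ l, (fun l => Xstar i l - Xstar j l) l * Q l k)^2 :=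
              Finset.sum_congr rfl fun k _ => by rw [hYd k]
          _ = ∑ k, (fun l => Xstar i l - Xstar j l) k ^ 2 := sum_sq_vecMul Q hQ _
          _ = ∑ k, (Xstar i k - Xstar j k)^2 := rfl
      have hrs : rdist Xstar i j = Real.sqrt (∑ k, (Y i k - Y j k)^2) := by
        unfold rdist eDist
        rw [hstep]
      have hAdiff : ∀ k, (X i k - X j k) - (Y i k - Y j k) = A i k - A j k := by
        intro k
        have h1 := centerMat_row_diff (toMat X) i j k
        have h2 := centerMat_row_diff Y i j k
        have hYc : (centerMat n * toMat Xstar * Q) i k = (centerMat n * Y) i k := by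
          rw [hY, Matrix.mul_assoc]
        have hYc' : (centerMat n * toMat Xstar * Q) j k = (centerMat n * Y) j k := by
          rw [hY, Matrix.mul_assoc]
        rw [hA]
        simp only [Matrix.sub_apply]
        rw [hYc, hYc']
        have hX : toMat X i k = X i k := rfl
        have hX' : toMat X j k = X j k := rfl
        rw [← hX, ← hX', ← h1, ← h2]
        ring
      set u := (WithLp.equiv 2 (Fin d → ℝ)).symm (fun k => X i k - X j k) with hu
      set w := (WithLp.equiv 2 (Fin d → ℝ)).symm (fun k => Y i k - Y j k) with hw
      have hrX : rdist X i j = ‖u‖ := by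
        unfold rdist eDist
        rw [hu, sqrt_sum_sq_eq_norm]
      have hrY : rdist Xstar i j = ‖w‖ := by
        rw [hrs, hw, sqrt_sum_sq_eq_norm]
      have huw : u - w = (WithLp.equiv 2 (Fin d → ℝ)).symm
          (fun k => (X i k - X j k) - (Y i k - Y j k)) := rfl
      have hnorm_uw : ‖u - w‖ = Real.sqrt (∑ k, (A i k - A j k)^2) := by
        rw [huw, ← sqrt_sum_sq_eq_norm]
        congr 1
        exact Finset.sum_congr rfl fun k _ => by rw [hAdiff k]
      have htri : |rdist X i j - rdist Xstar i j| ≤ ‖u - w‖ := by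
        rw [hrX, hrY]
        exact abs_norm_sub_norm_le u w
      have hsplit : Real.sqrt (∑ k, (A i k - A j k)^2)
          ≤ Real.sqrt (v i) + Real.sqrt (v j) := by
        have e1 : Real.sqrt (v i) = ‖(WithLp.equiv 2 (Fin d → ℝ)).symm (fun k => A i k)‖ := by
          rw [hv, ← sqrt_sum_sq_eq_norm]
        have e2 : Real.sqrt (v j) = ‖(WithLp.equiv 2 (Fin d → ℝ)).symm (fun k => A j k)‖ := by
          rw [hv, ← sqrt_sum_sq_eq_norm]
        have e3 : Real.sqrt (∑ k, (A i k - A j k)^2)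
            = ‖(WithLp.equiv 2 (Fin d → ℝ)).symm (fun k => A i k)
              - (WithLp.equiv 2 (Fin d → ℝ)).symm (fun k => A j k)‖ := by
          rw [show (WithLp.equiv 2 (Fin d → ℝ)).symm (fun k => A i k)
              - (WithLp.equiv 2 (Fin d → ℝ)).symm (fun k => A j k)
              = (WithLp.equiv 2 (Fin d → ℝ)).symm (fun k => A i k - A j k) from rfl]
          rw [← sqrt_sum_sq_eq_norm]
        rw [e1, e2, e3]
        exact norm_sub_le _ _
      have habs : |rdist X i j - rdist Xstar i j| ≤ Real.sqrt (v i) + Real.sqrt (v j) := by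
        rw [hnorm_uw] at htri
        linarith
      nlinarith [Real.sq_sqrt (hv0 i), Real.sq_sqrt (hv0 j), Real.sqrt_nonneg (v i),
        Real.sqrt_nonneg (v j), sq_nonneg (Real.sqrt (v i) - Real.sqrt (v j)),
        sq_abs (rdist X i j - rdist Xstar i j), abs_nonneg (rdist X i j - rdist Xstar i j),
        sq_nonneg (|rdist X i j - rdist Xstar i j| - (Real.sqrt (v i) + Real.sqrt (v j)))]
    -- sum bound
    have hps : pairSum (fun i j => (rdist X i j - rdist Xstar i j)^2) ≤ 4 * (n:ℝ) * S := by
      have h1 : pairSum (fun i j => (rdist X i j - rdist Xstar i j)^2)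
          ≤ ∑ i : Fin n, ∑ j : Fin n, (2 * v i + 2 * v j) := by
        unfold pairSum
        apply Finset.sum_le_sum
        intro i _
        apply Finset.sum_le_sum
        intro j _
        split_ifs with hij
        · exact hpair i j
        · have := hv0 i; have := hv0 j; linarith
      have hA1 : ∀ i : Fin n, ∑ j : Fin n, (2 * v i + 2 * v j) = (2*(n:ℝ)) * v i + 2 * S := by
        intro i
        rw [Finset.sum_add_distrib, Finset.sum_const, ← Finset.mul_sum, Finset.card_univ,
          Fintype.card_fin, nsmul_eq_mul, hS]
        ring
      have h2 : ∑ i : Fin n, ∑ j : Fin n, (2 * v i + 2 * v j) = 4 * (n:ℝ) * S := by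
        rw [Finset.sum_congr rfl (fun i _ => hA1 i), Finset.sum_add_distrib, Finset.sum_const,
          ← Finset.mul_sum, Finset.card_univ, Fintype.card_fin, nsmul_eq_mul, ← hS]
        ring
      linarith
    -- numPairs computation
    have hn1 : (1:ℝ) < (n:ℝ) := by linarith
    have hNPpos : 0 < numPairs n := by
      unfold numPairs
      nlinarith
    have hq : (numPairs n)⁻¹ * (4 * (n:ℝ) * S) ≤ 16 * (S * ((n:ℝ))⁻¹) := by
      have hne1 : (n:ℝ) ≠ 0 := by linarith
      have hne2 : (n:ℝ) - 1 ≠ 0 := by linarith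
      have hform : (numPairs n)⁻¹ * (4 * (n:ℝ) * S) = 8 * S / ((n:ℝ) - 1) := by
        unfold numPairs
        rw [eq_div_iff hne2]
        field_simp
        ring
      rw [hform]
      rw [div_le_iff₀ (by linarith)]
      have hni : 16 * (S * ((n:ℝ))⁻¹) * ((n:ℝ) - 1) = 16 * S * (((n:ℝ) - 1) * ((n:ℝ))⁻¹) := by
        ring
      rw [hni]
      have h12 : (1:ℝ)/2 ≤ ((n:ℝ) - 1) * ((n:ℝ))⁻¹ := by
        rw [← div_eq_mul_inv, div_le_div_iff₀ (by norm_num) (by linarith : (0:ℝ) < (n:ℝ))] <;>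
          linarith
      linarith [mul_nonneg hS0 (by linarith : (0:ℝ) ≤ ((n:ℝ) - 1) * ((n:ℝ))⁻¹ - 1/2)]
    calc distDiscrep X Xstar
        = (numPairs n)⁻¹ * pairSum (fun i j => (rdist X i j - rdist Xstar i j)^2) := rfl
      _ ≤ (numPairs n)⁻¹ * (4 * (n:ℝ) * S) := by
          apply mul_le_mul_of_nonneg_left hps (inv_nonneg.2 (numPairs_nonneg n))
      _ ≤ 16 * (S * ((n:ℝ))⁻¹) := hq
      _ = 16 * ((Real.sqrt n)⁻¹ * frobNorm A) ^ 2 := hRHS.symm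

end PartB


lemma distDiscrep_le_orbit {n d : ℕ} (X Xstar : Fin n → Fin d → ℝ) :
    distDiscrep X Xstar ≤ 16 * orbitDist X Xstar ^ 2 := by
  set D := distDiscrep X Xstar with hD
  set T : Set ℝ := {t | ∃ Q : Matrix (Fin d) (Fin d) ℝ, Q ∈ Matrix.orthogonalGroup (Fin d) ℝ ∧
    t = (Real.sqrt n)⁻¹ *
      frobNorm (centerMat n * toMat X - centerMat n * toMat Xstar * Q)} with hT
  have horb : orbitDist X Xstar = sInf T := rfl
  have hne : T.Nonempty := by
    refine ⟨(Real.sqrt n)⁻¹ * frobNorm (centerMat n * toMat X - centerMat n * toMat Xstar * 1),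
      1, ?_, rfl⟩
    exact one_mem _
  rcases le_or_gt D 0 with hD0 | hD0
  · have : 0 ≤ orbitDist X Xstar ^ 2 := sq_nonneg _
    linarith
  · have hlb : ∀ t ∈ T, Real.sqrt (D / 16) ≤ t := by
      rintro t ⟨Q, hQ, rfl⟩
      have h := distDiscrep_le_frob X Xstar Q hQ
      have ht0 : 0 ≤ (Real.sqrt n)⁻¹ *
          frobNorm (centerMat n * toMat X - centerMat n * toMat Xstar * Q) :=
        mul_nonneg (inv_nonneg.2 (Real.sqrt_nonneg _)) (frobNorm_nonneg _)
      calc Real.sqrt (D / 16)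
          ≤ Real.sqrt (((Real.sqrt n)⁻¹ *
              frobNorm (centerMat n * toMat X - centerMat n * toMat Xstar * Q)) ^ 2) := by
            apply Real.sqrt_le_sqrt
            rw [hD]
            linarith
        _ = _ := Real.sqrt_sq ht0
    have hInf : Real.sqrt (D / 16) ≤ sInf T := le_csInf hne hlb
    have hs0 : 0 ≤ Real.sqrt (D / 16) := Real.sqrt_nonneg _
    have hsq : Real.sqrt (D / 16) ^ 2 ≤ (sInf T) ^ 2 := by
      apply pow_le_pow_left₀ hs0 hInf
    rw [Real.sq_sqrt (by linarith : (0:ℝ) ≤ D / 16)] at hsq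
    rw [horb]
    linarith

lemma rdist_mem_Icc {n d : ℕ} (Y : Fin n → Fin d → ℝ) (hY : Y ∈ cube n d) (i j : Fin n) :
    rdist Y i j ∈ Set.Icc 0 (Real.sqrt d) := by
  constructor
  · exact Real.sqrt_nonneg _
  · unfold rdist eDist
    apply Real.sqrt_le_sqrt
    calc ∑ k, (Y i k - Y j k)^2 ≤ ∑ k : Fin d, (1:ℝ) := by
          apply Finset.sum_le_sum
          intro k _
          have h1 := hY i k
          have h2 := hY j k
          obtain ⟨h1a, h1b⟩ := h1
          obtain ⟨h2a, h2b⟩ := h2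
          nlinarith
      _ = (d:ℝ) := by
          rw [Finset.sum_const, Finset.card_univ, Fintype.card_fin, nsmul_eq_mul, mul_one]



/-- Proposition A.9: quadratic upper bound for the population risk
in orbit distance. -/
theorem population_risk_quadratic_upper_bound
    (d : ℕ) (hd : 1 ≤ d) (σ M : ℝ) (hσ : 0 < σ) (hM : Real.sqrt d ≤ M) :
    ∃ Cup : ℝ, 0 < Cup ∧
      ∀ (n : ℕ) (Xstar : Fin n → Fin d → ℝ), Xstar ∈ cube n d →
        ∀ X ∈ cube n d,
          popRisk σ M Xstar X - popRisk σ M Xstar Xstar ≤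
            Cup * orbitDist X Xstar ^ 2 := by
  obtain ⟨C1, hC1, hC1bd⟩ := lemmaA d σ M hσ hd hM
  refine ⟨16 * C1, by positivity, ?_⟩
  intro n Xstar hXs X hX
  have hpp : ∀ i j : Fin n,
      popLoss σ M (rdist X i j) (rdist Xstar i j)
        - popLoss σ M (rdist Xstar i j) (rdist Xstar i j)
      ≤ C1 * (rdist X i j - rdist Xstar i j)^2 :=
    fun i j => hC1bd _ _ (rdist_mem_Icc X hX i j) (rdist_mem_Icc Xstar hXs i j)
  have h1 : popRisk σ M Xstar X - popRisk σ M Xstar Xstar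
      = (numPairs n)⁻¹ * pairSum (fun i j =>
          popLoss σ M (rdist X i j) (rdist Xstar i j)
            - popLoss σ M (rdist Xstar i j) (rdist Xstar i j)) := by
    unfold popRisk
    rw [← mul_sub, pairSum_sub]
  have h2 : pairSum (fun i j =>
        popLoss σ M (rdist X i j) (rdist Xstar i j)
          - popLoss σ M (rdist Xstar i j) (rdist Xstar i j))
      ≤ pairSum (fun i j => C1 * (rdist X i j - rdist Xstar i j)^2) :=
    pairSum_mono fun i j _ => hpp i j
  calc popRisk σ M Xstar X - popRisk σ M Xstar Xstar
      = (numPairs n)⁻¹ * pairSum (fun i j =>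
          popLoss σ M (rdist X i j) (rdist Xstar i j)
            - popLoss σ M (rdist Xstar i j) (rdist Xstar i j)) := h1
    _ ≤ (numPairs n)⁻¹ * pairSum (fun i j => C1 * (rdist X i j - rdist Xstar i j)^2) :=
        mul_le_mul_of_nonneg_left h2 (inv_nonneg.2 (numPairs_nonneg n))
    _ = C1 * distDiscrep X Xstar := by
        rw [pairSum_const_mul]
        unfold distDiscrep
        ring
    _ ≤ C1 * (16 * orbitDist X Xstar ^ 2) :=
        mul_le_mul_of_nonneg_left (distDiscrep_le_orbit X Xstar) hC1.le
    _ = 16 * C1 * orbitDist X Xstar ^ 2 := by ring
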